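/- Let G be a [p, 2m, k] balanced complex orthogonal design (BCOD) in B_i form for some i ∈ {1,…,k}, with m ≥ 2. Let G' be the p×(2m−2) matrix obtained from G by deleting the m-th column and the 2m-th column. Then G' is again a BCOD (with 2(m−1) columns). -/

import Mathlib

open Matrix

/-- A formal entry of a complex orthogonal design: either `0`, or `± z_i`, or `± z_i^*`.
Here `sign = true` means sign `+1`, and `conj = true` means the conjugated symbol `z_i^*`. -/
inductive CODEntry (k : ℕ) : Type where
  | zero : CODEntry k
  | var (sign : Bool) (conj : Bool) (idx : Fin k) : CODEntry k
deriving DecidableEq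

namespace CODEntry

variable {k k' : ℕ}

/-- Evaluate a formal entry at an assignment of complex values to the indeterminates. -/
def eval (z : Fin k → ℂ) : CODEntry k → ℂ
  | zero => 0
  | var s c i => (if s then (1 : ℂ) else -1) * (if c then (starRingEnd ℂ) (z i) else z i)

/-- Formal negation of an entry. -/
def neg : CODEntry k → CODEntry k
  | zero => zero
  | var s c i => var (!s) c i

/-- Formal conjugation of an entry (with `0^* = 0`). -/
def conj : CODEntry k → CODEntry k
  | zero => zero
  | var s c i => var s (!c) i

/-- Optionally negate an entry. -/
def negIf (b : Bool) (e : CODEntry k) : CODEntry k := if b then e.neg else e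

/-- Rename variables according to a permutation of the indices. -/
def rename (σ : Equiv.Perm (Fin k)) : CODEntry k → CODEntry k
  | zero => zero
  | var s c i => var s c (σ i)

/-- Negate all instances of the variable `z_j`. -/
def negVar (j : Fin k) : CODEntry k → CODEntry k
  | zero => zero
  | var s c i => if i = j then var (!s) c i else var s c i

/-- Conjugate all instances of the variable `z_j` (swap `z_j ↔ z_j^*`). -/
def conjVar (j : Fin k) : CODEntry k → CODEntry k
  | zero => zero
  | var s c i => if i = j then var s (!c) i else var s c i

/-- Transport an entry along a map of variable index sets. -/
def mapIdx (f : Fin k → Fin k') : CODEntry k → CODEntry k'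
  | zero => zero
  | var s c i => var s c (f i)

/-- Whether a (nonzero) entry is a conjugated symbol `± z_i^*`. -/
def isConj : CODEntry k → Bool
  | zero => false
  | var _ c _ => c

/-- The index of the variable occurring in an entry, if any. -/
def index : CODEntry k → Option (Fin k)
  | zero => none
  | var _ _ i => some i

end CODEntry

/-- `G` is a `[p, n, k]` complex orthogonal design (COD): for every assignment of complex
values to the indeterminates, `Gᴴ * G = (|z_1|² + … + |z_k|²) • I_n`. -/
def IsCOD {p n k : ℕ} (G : Matrix (Fin p) (Fin n) (CODEntry k)) : Prop :=
  ∀ z : Fin k → ℂ,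
    (G.map (CODEntry.eval z))ᴴ * (G.map (CODEntry.eval z)) =
      ((∑ i, Complex.normSq (z i) : ℝ) : ℂ) • (1 : Matrix (Fin n) (Fin n) ℂ)

/-- The equivalence operations on `[p, n, k]` CODs. -/
inductive EquivOp (p n k : ℕ) : Type where
  | rowPerm (σ : Equiv.Perm (Fin p))
  | rowNeg (r : Fin p)
  | colPerm (σ : Equiv.Perm (Fin n))
  | colNeg (c : Fin n)
  | varRename (σ : Equiv.Perm (Fin k))
  | varNeg (i : Fin k)
  | varConj (i : Fin k)

namespace EquivOp

variable {p n k : ℕ}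

/-- Apply an equivalence operation to a matrix of formal entries. -/
def apply (G : Matrix (Fin p) (Fin n) (CODEntry k)) :
    EquivOp p n k → Matrix (Fin p) (Fin n) (CODEntry k)
  | rowPerm σ => fun r c => G (σ r) c
  | rowNeg r₀ => fun r c => if r = r₀ then (G r c).neg else G r c
  | colPerm σ => fun r c => G r (σ c)
  | colNeg c₀ => fun r c => if c = c₀ then (G r c).neg else G r c
  | varRename σ => fun r c => (G r c).rename σ
  | varNeg i => fun r c => (G r c).negVar i
  | varConj i => fun r c => (G r c).conjVar i

/-- The operation is a column permutation. -/
def IsColPerm : EquivOp p n k → Prop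
  | colPerm _ => True
  | _ => False

/-- The operation is a column negation. -/
def IsColNeg : EquivOp p n k → Prop
  | colNeg _ => True
  | _ => False

/-- The operation is a variable renaming. -/
def IsVarRename : EquivOp p n k → Prop
  | varRename _ => True
  | _ => False

/-- Where each row of the original matrix is sent by the operation. -/
def rowMap : EquivOp p n k → Equiv.Perm (Fin p)
  | rowPerm σ => σ⁻¹
  | _ => 1

end EquivOp

/-- Apply a finite sequence of equivalence operations, in order. -/
def applyOps {p n k : ℕ} (G : Matrix (Fin p) (Fin n) (CODEntry k))
    (ops : List (EquivOp p n k)) : Matrix (Fin p) (Fin n) (CODEntry k) :=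
  ops.foldl EquivOp.apply G

/-- Where each row of the original matrix is sent by a sequence of operations. -/
def opsRowMap {p n k : ℕ} (ops : List (EquivOp p n k)) : Equiv.Perm (Fin p) :=
  ops.foldl (fun τ op => op.rowMap * τ) 1

/-- An operation on a COD with `m + m` columns is column-restricted if, in case it is a
column permutation, it is the transposition of columns `i` and `m + i` for some `i`. -/
def EquivOp.ColumnRestricted {p m k : ℕ} : EquivOp p (m + m) k → Prop
  | .colPerm σ => ∃ i : Fin m, σ = Equiv.swap (Fin.castAdd m i) (Fin.natAdd m i)
  | _ => True

/-- `G` contains the `B_i` form submatrix on the `2m` rows selected by the embedding `f`: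
the block matrix `((z_i I_m, M), (−Mᴴ, z_i^* I_m))` where `M` is the top-right block. -/
def ContainsBFormWith {p m k : ℕ} (G : Matrix (Fin p) (Fin (m + m)) (CODEntry k))
    (i : Fin k) (f : Fin (m + m) ↪ Fin p) : Prop :=
  (∀ r s : Fin m, G (f (Fin.castAdd m r)) (Fin.castAdd m s) =
      if r = s then CODEntry.var true false i else CODEntry.zero) ∧
  (∀ r s : Fin m, G (f (Fin.natAdd m r)) (Fin.natAdd m s) =
      if r = s then CODEntry.var true true i else CODEntry.zero) ∧
  (∀ r s : Fin m, G (f (Fin.natAdd m r)) (Fin.castAdd m s) =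
      ((G (f (Fin.castAdd m s)) (Fin.natAdd m r)).conj).neg)

/-- As `ContainsBFormWith`, and moreover the top-right block `M` is (formally)
skew-symmetric: `Mᵀ = −M`. -/
def ContainsSkewBFormWith {p m k : ℕ} (G : Matrix (Fin p) (Fin (m + m)) (CODEntry k))
    (i : Fin k) (f : Fin (m + m) ↪ Fin p) : Prop :=
  ContainsBFormWith G i f ∧
  ∀ r s : Fin m, G (f (Fin.castAdd m s)) (Fin.natAdd m r) =
    (G (f (Fin.castAdd m r)) (Fin.natAdd m s)).neg

/-- `G` is in `B_i` form: after equivalence operations excluding column permutations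
(and not renaming variables), it contains the `B_i` form submatrix. -/
def InBForm {p m k : ℕ} (G : Matrix (Fin p) (Fin (m + m)) (CODEntry k)) (i : Fin k) : Prop :=
  ∃ ops : List (EquivOp p (m + m) k),
    (∀ op ∈ ops, ¬ op.IsColPerm ∧ ¬ op.IsVarRename) ∧
    ∃ f, ContainsBFormWith (applyOps G ops) i f

/-- `G` is in `B_i` form with skew-symmetric block `M_i`. -/
def InSkewBForm {p m k : ℕ} (G : Matrix (Fin p) (Fin (m + m)) (CODEntry k)) (i : Fin k) : Prop :=
  ∃ ops : List (EquivOp p (m + m) k),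
    (∀ op ∈ ops, ¬ op.IsColPerm ∧ ¬ op.IsVarRename) ∧
    ∃ f, ContainsSkewBFormWith (applyOps G ops) i f

/-- `G` is a balanced complex orthogonal design (BCOD) with `2m` columns:
a COD in which every row has exactly `m` zero entries (hence `m` nonzero ones),
every row is conjugation-separated, and for each variable `z_j` it is in `B_j` form
with skew-symmetric block `M_j`. -/
def IsBCOD {p m k : ℕ} (G : Matrix (Fin p) (Fin (m + m)) (CODEntry k)) : Prop :=
  IsCOD G ∧
  (∀ r : Fin p, (Finset.univ.filter fun c => G r c = CODEntry.zero).card = m) ∧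
  (∀ r : Fin p,
      (∀ c, G r c ≠ CODEntry.zero → (G r c).isConj = true) ∨
      (∀ c, G r c ≠ CODEntry.zero → (G r c).isConj = false)) ∧
  (∀ j : Fin k, InSkewBForm G j)

/-- `G` is the direct sum of `G₁` (on top) and `G₂` (below), where `G₁` and `G₂` use
disjoint sets of indeterminates, embedded into `Fin k` via `ι₁` and `ι₂`. -/
def IsDirectSumOf {p n k p₁ p₂ k₁ k₂ : ℕ} (hp : p = p₁ + p₂)
    (G : Matrix (Fin p) (Fin n) (CODEntry k))
    (G₁ : Matrix (Fin p₁) (Fin n) (CODEntry k₁))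
    (G₂ : Matrix (Fin p₂) (Fin n) (CODEntry k₂))
    (ι₁ : Fin k₁ ↪ Fin k) (ι₂ : Fin k₂ ↪ Fin k) : Prop :=
  k = k₁ + k₂ ∧ (∀ a b, ι₁ a ≠ ι₂ b) ∧
  ∀ (r : Fin p) (c : Fin n),
    if h : (r : ℕ) < p₁ then G r c = (G₁ ⟨(r : ℕ), h⟩ c).mapIdx (fun i => ι₁ i)
    else G r c = (G₂ ⟨(r : ℕ) - p₁, by have := r.isLt; omega⟩ c).mapIdx (fun i => ι₂ i)

/-- A COD is decomposable if, after a permutation of its rows, it can be expressed as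
the direct sum of two (nonempty) CODs on disjoint sets of indeterminates. -/
def IsDecomposable {p n k : ℕ} (G : Matrix (Fin p) (Fin n) (CODEntry k)) : Prop :=
  ∃ (σ : Equiv.Perm (Fin p)) (p₁ p₂ k₁ k₂ : ℕ) (hp : p = p₁ + p₂)
    (G₁ : Matrix (Fin p₁) (Fin n) (CODEntry k₁))
    (G₂ : Matrix (Fin p₂) (Fin n) (CODEntry k₂))
    (ι₁ : Fin k₁ ↪ Fin k) (ι₂ : Fin k₂ ↪ Fin k),
    0 < p₁ ∧ 0 < p₂ ∧ IsCOD G₁ ∧ IsCOD G₂ ∧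
    IsDirectSumOf hp (fun r c => G (σ r) c) G₁ G₂ ι₁ ι₂

/-- Rows `r₁` and `r₂` of `G` form a pair: if `r₁` is `(α₁,…,α_m, β₁,…,β_m)` then `r₂`
is `(±β₁^*,…,±β_m^*, ±α₁^*,…,±α_m^*)` (the signs may differ from entry to entry). -/
def IsPairRows {p m k : ℕ} (G : Matrix (Fin p) (Fin (m + m)) (CODEntry k))
    (r₁ r₂ : Fin p) : Prop :=
  ∀ s : Fin m,
    (∃ b : Bool, G r₂ (Fin.castAdd m s) = CODEntry.negIf b ((G r₁ (Fin.natAdd m s)).conj)) ∧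
    (∃ b : Bool, G r₂ (Fin.natAdd m s) = CODEntry.negIf b ((G r₁ (Fin.castAdd m s)).conj))

/-- Delete the `(m+1)`-st and `(2(m+1))`-th columns (1-indexed, i.e. the last column of each
half) from a matrix with `2(m+1)` columns. -/
def deleteMiddleCols {p m k : ℕ}
    (G : Matrix (Fin p) (Fin ((m + 1) + (m + 1))) (CODEntry k)) :
    Matrix (Fin p) (Fin (m + m)) (CODEntry k) :=
  fun r c =>
    G r (if h : (c : ℕ) < m then ⟨(c : ℕ), by omega⟩
         else ⟨(c : ℕ) + 1, by have := c.isLt; omega⟩)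

/-!
In a BCOD every row has exactly one zero in each column pair `{t, m + t}`. Indeed, a row
containing `z_j` is, by the uniqueness of `z_j` in each column of a COD, a row of the `B_j` block
(equivalence operations without column permutations move rows but keep the positions of zeros
and variables). In that block every column pair of a row contains a zero: an off-diagonal zero of
`z_j I_m` or `z_j^* I_m`, or a diagonal entry of the skew-symmetric `M_j`. As the row has exactly
`m` zeros, each pair contains exactly one.

Deleting column pairs therefore keeps the balance. The COD property survives because the new
`Gᴴ G` is a principal submatrix of the old one, and the `B_j` forms restrict to the rows indexed by
the remaining pairs once the equivalence operations on deleted columns are dropped.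
-/

open Finset

namespace CODEntry

variable {k : ℕ}

lemma index_eq_none_iff (e : CODEntry k) : e.index = none ↔ e = zero := by
  cases e <;> simp [index]

@[simp]
lemma index_neg (e : CODEntry k) : e.neg.index = e.index := by
  cases e <;> rfl

@[simp]
lemma index_negVar (j : Fin k) (e : CODEntry k) : (e.negVar j).index = e.index := by
  cases e with
  | zero => rfl
  | var s c i => simp only [negVar]; split_ifs <;> rfl

@[simp]
lemma index_conjVar (j : Fin k) (e : CODEntry k) : (e.conjVar j).index = e.index := by
  cases e with
  | zero => rfl
  | var s c i => simp only [conjVar]; split_ifs <;> rfl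

lemma eq_neg_iff (e : CODEntry k) : e = e.neg ↔ e = zero := by
  cases e with
  | zero => simp [neg]
  | var s c i => cases s <;> simp [neg]

lemma normSq_eval_single (j : Fin k) (e : CODEntry k) :
    Complex.normSq (e.eval (Pi.single j 1)) = if e.index = some j then 1 else 0 := by
  cases e with
  | zero => simp [eval, index]
  | var s c i =>
    rcases eq_or_ne i j with rfl | h
    · cases s <;> cases c <;> simp [eval, index]
    · cases s <;> cases c <;> simp [eval, index, h]

end CODEntry

section COD

variable {p n n' k : ℕ} {G : Matrix (Fin p) (Fin n) (CODEntry k)}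

lemma IsCOD.submatrix_cols (hG : IsCOD G) (e : Fin n' ↪ Fin n) : IsCOD (G.submatrix id e) := by
  intro z
  rw [← submatrix_map, conjTranspose_submatrix, ← submatrix_mul _ _ _ _ _ Function.bijective_id,
    hG z]
  exact congrArg (((∑ i, Complex.normSq (z i) : ℝ) : ℂ) • ·) (submatrix_one_embedding (α := ℂ) e)

lemma IsCOD.eq_of_index_eq_some (hG : IsCOD G) {j : Fin k} {c : Fin n} {a b : Fin p}
    (ha : (G a c).index = some j) (hb : (G b c).index = some j) : a = b := by
  classical
  have hcol := congrFun (congrFun (hG (Pi.single j 1)) c) c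
  simp only [mul_apply, conjTranspose_apply, map_apply, RCLike.star_def,
    ← Complex.normSq_eq_conj_mul_self, CODEntry.normSq_eval_single, apply_ite, Complex.ofReal_one,
    Complex.ofReal_zero, sum_boole, Pi.single_apply, map_one, map_zero, Matrix.smul_apply,
    one_apply_eq, smul_eq_mul, mul_one, filter_eq', if_pos (mem_univ j), card_singleton,
    Nat.cast_one, Complex.ofReal_one, Nat.cast_eq_one] at hcol
  exact card_le_one.1 hcol.le a (by simp [ha]) b (by simp [hb])

end COD

namespace EquivOp

variable {p n n' k : ℕ}

lemma exists_perm_index_apply (op : EquivOp p n k) (hc : ¬ op.IsColPerm) (hv : ¬ op.IsVarRename)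
    (G : Matrix (Fin p) (Fin n) (CODEntry k)) :
    ∃ σ : Equiv.Perm (Fin p), ∀ r c, (op.apply G r c).index = (G (σ r) c).index := by
  cases op with
  | rowPerm σ => exact ⟨σ, fun _ _ => rfl⟩
  | rowNeg r₀ => exact ⟨1, fun r c => by simp only [apply]; split_ifs <;> simp⟩
  | colPerm => exact absurd trivial hc
  | colNeg c₀ => exact ⟨1, fun r c => by simp only [apply]; split_ifs <;> simp⟩
  | varRename => exact absurd trivial hv
  | varNeg j => exact ⟨1, fun r c => CODEntry.index_negVar j _⟩
  | varConj j => exact ⟨1, fun r c => CODEntry.index_conjVar j _⟩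

noncomputable def restrictCols (e : Fin n' ↪ Fin n) : EquivOp p n k → List (EquivOp p n' k)
  | rowPerm σ => [rowPerm σ]
  | rowNeg r => [rowNeg r]
  | colPerm _ => []
  | colNeg c => if h : ∃ c', e c' = c then [colNeg h.choose] else []
  | varRename σ => [varRename σ]
  | varNeg i => [varNeg i]
  | varConj i => [varConj i]

lemma admissible_of_mem_restrictCols {e : Fin n' ↪ Fin n} {op : EquivOp p n k}
    {op' : EquivOp p n' k} (h : op' ∈ op.restrictCols e) (hv : ¬ op.IsVarRename) :
    ¬ op'.IsColPerm ∧ ¬ op'.IsVarRename := by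
  cases op with
  | colNeg c =>
    simp only [restrictCols] at h
    split_ifs at h <;> simp_all [IsColPerm, IsVarRename]
  | _ => simp_all [restrictCols, IsColPerm, IsVarRename]

lemma applyOps_restrictCols (e : Fin n' ↪ Fin n) (op : EquivOp p n k) (hc : ¬ op.IsColPerm)
    (G : Matrix (Fin p) (Fin n) (CODEntry k)) :
    applyOps (G.submatrix id e) (op.restrictCols e) = (op.apply G).submatrix id e := by
  cases op with
  | colPerm => exact absurd trivial hc
  | colNeg c₀ =>
    simp only [restrictCols]
    split_ifs with h
    · ext r c
      have hc' := h.choose_spec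
      generalize h.choose = c' at hc' ⊢
      subst hc'
      change (if c = c' then _ else _) = (if e c = e c' then _ else _)
      simp only [e.injective.eq_iff]
      rfl
    · ext r c
      change G r (e c) = (if e c = c₀ then _ else _)
      rw [if_neg fun hc => h ⟨c, hc⟩]
      rfl
  | _ => rfl

end EquivOp

lemma applyOps_flatMap_restrictCols {p n n' k : ℕ} (e : Fin n' ↪ Fin n)
    (ops : List (EquivOp p n k)) (hops : ∀ op ∈ ops, ¬ op.IsColPerm)
    (G : Matrix (Fin p) (Fin n) (CODEntry k)) :
    applyOps (G.submatrix id e) (ops.flatMap (EquivOp.restrictCols e)) =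
      (applyOps G ops).submatrix id e := by
  induction ops generalizing G with
  | nil => rfl
  | cons op ops ih =>
    rw [List.flatMap_cons, applyOps, List.foldl_append]
    change applyOps (applyOps (G.submatrix id e) (op.restrictCols e)) _ =
      (applyOps (op.apply G) ops).submatrix id e
    rw [EquivOp.applyOps_restrictCols e op (hops op List.mem_cons_self)]
    exact ih (fun o ho => hops o (List.mem_cons_of_mem _ ho)) _

lemma exists_perm_index_applyOps {p n k : ℕ} (ops : List (EquivOp p n k))
    (hops : ∀ op ∈ ops, ¬ op.IsColPerm ∧ ¬ op.IsVarRename)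
    (G : Matrix (Fin p) (Fin n) (CODEntry k)) :
    ∃ σ : Equiv.Perm (Fin p), ∀ r c, (applyOps G ops r c).index = (G (σ r) c).index := by
  induction ops generalizing G with
  | nil => exact ⟨1, fun _ _ => rfl⟩
  | cons op ops ih =>
    obtain ⟨hc, hv⟩ := hops op List.mem_cons_self
    obtain ⟨σ, hσ⟩ := op.exists_perm_index_apply hc hv G
    obtain ⟨τ, hτ⟩ := ih (fun o ho => hops o (List.mem_cons_of_mem _ ho)) (op.apply G)
    exact ⟨τ.trans σ, fun r c => (hτ r c).trans (hσ (τ r) c)⟩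

def pairedCols {m m' : ℕ} (g : Fin m' ↪ Fin m) : Fin (m' + m') ↪ Fin (m + m) :=
  finSumFinEquiv.symm.toEmbedding.trans ((g.sumMap g).trans finSumFinEquiv.toEmbedding)

section PairedCols

variable {p m m' k : ℕ}

@[simp]
lemma pairedCols_castAdd (g : Fin m' ↪ Fin m) (t : Fin m') :
    pairedCols g (Fin.castAdd m' t) = Fin.castAdd m (g t) := by
  simp only [pairedCols, Function.Embedding.trans_apply, Equiv.coe_toEmbedding,
    finSumFinEquiv_symm_apply_castAdd]
  exact finSumFinEquiv_apply_left (g t)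

@[simp]
lemma pairedCols_natAdd (g : Fin m' ↪ Fin m) (t : Fin m') :
    pairedCols g (Fin.natAdd m' t) = Fin.natAdd m (g t) := by
  simp only [pairedCols, Function.Embedding.trans_apply, Equiv.coe_toEmbedding,
    finSumFinEquiv_symm_apply_natAdd]
  exact finSumFinEquiv_apply_right (g t)

lemma deleteMiddleCols_eq_submatrix (G : Matrix (Fin p) (Fin ((m + 1) + (m + 1))) (CODEntry k)) :
    deleteMiddleCols G = G.submatrix id (pairedCols Fin.castSuccEmb) := by
  ext r c
  refine Fin.addCases (fun t => ?_) (fun t => ?_) c <;>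
    simp only [deleteMiddleCols, submatrix_apply, id, pairedCols_castAdd, pairedCols_natAdd] <;>
    congr 1 <;> ext
  · simp
  · simp only [Fin.natAdd_eq_addNat, Fin.val_addNat, add_lt_iff_neg_right, not_lt_zero,
      ↓reduceDIte, Fin.coe_castSuccEmb, Fin.val_castSucc]
    omega

lemma ContainsSkewBFormWith.submatrix_pairedCols {H : Matrix (Fin p) (Fin (m + m)) (CODEntry k)}
    {j : Fin k} {f : Fin (m + m) ↪ Fin p} (h : ContainsSkewBFormWith H j f)
    (g : Fin m' ↪ Fin m) :
    ContainsSkewBFormWith (H.submatrix id (pairedCols g)) j ((pairedCols g).trans f) := by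
  obtain ⟨⟨htop, hbot, hlow⟩, hskew⟩ := h
  refine ⟨⟨fun r s => ?_, fun r s => ?_, fun r s => ?_⟩, fun r s => ?_⟩ <;>
    simp only [submatrix_apply, id, Function.Embedding.trans_apply, pairedCols_castAdd,
      pairedCols_natAdd]
  · simp only [htop, g.injective.eq_iff]
  · simp only [hbot, g.injective.eq_iff]
  · exact hlow _ _
  · exact hskew _ _

lemma InSkewBForm.submatrix_pairedCols {G : Matrix (Fin p) (Fin (m + m)) (CODEntry k)}
    {j : Fin k} (h : InSkewBForm G j) (g : Fin m' ↪ Fin m) :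
    InSkewBForm (G.submatrix id (pairedCols g)) j := by
  obtain ⟨ops, hops, f, hf⟩ := h
  refine ⟨ops.flatMap (EquivOp.restrictCols (pairedCols g)), fun op' hop' => ?_,
    (pairedCols g).trans f, ?_⟩
  · obtain ⟨op, hop, hmem⟩ := List.mem_flatMap.1 hop'
    exact EquivOp.admissible_of_mem_restrictCols hmem (hops op hop).2
  · rw [applyOps_flatMap_restrictCols _ _ fun op hop => (hops op hop).1]
    exact hf.submatrix_pairedCols g

end PairedCols

section Pairs

variable {M : ℕ} (P : Fin (M + M) → Prop) [DecidablePred P]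

lemma card_filter_eq_sum_pairs :
    #{c | P c} = ∑ t : Fin M,
      ((if P (Fin.castAdd M t) then 1 else 0) + (if P (Fin.natAdd M t) then 1 else 0)) := by
  rw [card_filter, Fin.sum_univ_add, sum_add_distrib]

lemma card_filter_of_forall_xor (h : ∀ t, P (Fin.castAdd M t) ↔ ¬ P (Fin.natAdd M t)) :
    #{c | P c} = M := by
  have hpair : ∀ t : Fin M,
      (if P (Fin.castAdd M t) then 1 else 0) + (if P (Fin.natAdd M t) then 1 else 0) = 1 := by
    intro t
    by_cases hP : P (Fin.natAdd M t)
    · rw [if_neg fun hc => (h t).1 hc hP, if_pos hP]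
    · rw [if_pos ((h t).2 hP), if_neg hP]
  rw [card_filter_eq_sum_pairs, sum_congr rfl fun t _ => hpair t, sum_const, card_univ,
    Fintype.card_fin, smul_eq_mul, mul_one]

lemma forall_xor_of_card_filter (hcard : #{c | P c} = M)
    (hor : ∀ t, P (Fin.castAdd M t) ∨ P (Fin.natAdd M t)) :
    ∀ t, P (Fin.castAdd M t) ↔ ¬ P (Fin.natAdd M t) := by
  have hle : ∀ t ∈ (univ : Finset (Fin M)),
      1 ≤ (if P (Fin.castAdd M t) then 1 else 0) + (if P (Fin.natAdd M t) then 1 else 0) := by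
    intro t _
    rcases hor t with hP | hP
    · rw [if_pos hP]; exact Nat.le_add_right _ _
    · rw [if_pos hP]; exact Nat.le_add_left _ _
  have hsum := (sum_eq_sum_iff_of_le hle).1 (by
    rw [← card_filter_eq_sum_pairs, hcard, sum_const, card_univ, Fintype.card_fin, smul_eq_mul,
      mul_one])
  intro t
  refine ⟨fun hc hn => ?_, (hor t).resolve_right⟩
  have ht := hsum t (mem_univ t)
  rw [if_pos hc, if_pos hn] at ht
  omega

end Pairs

section BForm

variable {p m k : ℕ} {H : Matrix (Fin p) (Fin (m + m)) (CODEntry k)} {i : Fin k}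
  {f : Fin (m + m) ↪ Fin p}

lemma ContainsBFormWith.index_diag (h : ContainsBFormWith H i f) (c : Fin (m + m)) :
    (H (f c) c).index = some i := by
  refine Fin.addCases (fun s => ?_) (fun s => ?_) c
  · rw [h.1 s s, if_pos rfl]; rfl
  · rw [h.2.1 s s, if_pos rfl]; rfl

lemma ContainsSkewBFormWith.castAdd_eq_zero_or_natAdd_eq_zero (h : ContainsSkewBFormWith H i f)
    (c : Fin (m + m)) (t : Fin m) :
    H (f c) (Fin.castAdd m t) = .zero ∨ H (f c) (Fin.natAdd m t) = .zero := by
  obtain ⟨⟨htop, hbot, hlow⟩, hskew⟩ := h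
  have hdiag : ∀ s, H (f (Fin.castAdd m s)) (Fin.natAdd m s) = .zero :=
    fun s => (CODEntry.eq_neg_iff _).1 (hskew s s)
  refine Fin.addCases (fun s => ?_) (fun s => ?_) c
  · by_cases hst : s = t
    · exact .inr (hst ▸ hdiag s)
    · exact .inl (by rw [htop, if_neg hst])
  · by_cases hst : s = t
    · exact .inl (by rw [hlow, ← hst, hdiag]; rfl)
    · exact .inr (by rw [hbot, if_neg hst])

end BForm

section BCOD

variable {p m m' k : ℕ} {G : Matrix (Fin p) (Fin (m + m)) (CODEntry k)}

lemma IsBCOD.exists_ne_zero (hG : IsBCOD G) (r : Fin p) (hm : 0 < m) :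
    ∃ c, G r c ≠ .zero := by
  by_contra! hzero
  have hcard := hG.2.1 r
  simp only [hzero, filter_true, card_univ, Fintype.card_fin, Nat.add_eq_left] at hcard
  exact hm.ne' hcard

lemma IsBCOD.castAdd_eq_zero_or_natAdd_eq_zero (hG : IsBCOD G) (r : Fin p) (t : Fin m) :
    G r (Fin.castAdd m t) = .zero ∨ G r (Fin.natAdd m t) = .zero := by
  obtain ⟨c₀, hc₀⟩ := hG.exists_ne_zero r t.pos
  obtain ⟨j, hj⟩ := Option.ne_none_iff_exists'.1 (mt (CODEntry.index_eq_none_iff _).1 hc₀)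
  obtain ⟨ops, hops, f, hf⟩ := hG.2.2.2 j
  obtain ⟨σ, hσ⟩ := exists_perm_index_applyOps ops hops G
  have hrow : σ (f c₀) = r := hG.1.eq_of_index_eq_some (hσ _ _ ▸ hf.1.index_diag c₀) hj
  have hzero : ∀ c, applyOps G ops (f c₀) c = .zero ↔ G r c = .zero := by
    intro c
    rw [← CODEntry.index_eq_none_iff, ← CODEntry.index_eq_none_iff, hσ, hrow]
  simpa only [hzero] using hf.castAdd_eq_zero_or_natAdd_eq_zero c₀ t

lemma IsBCOD.castAdd_eq_zero_iff (hG : IsBCOD G) (r : Fin p) (t : Fin m) :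
    G r (Fin.castAdd m t) = .zero ↔ G r (Fin.natAdd m t) ≠ .zero :=
  forall_xor_of_card_filter (fun c => G r c = .zero) (hG.2.1 r)
    (hG.castAdd_eq_zero_or_natAdd_eq_zero r) t

theorem IsBCOD.submatrix_pairedCols (hG : IsBCOD G) (g : Fin m' ↪ Fin m) :
    IsBCOD (G.submatrix id (pairedCols g)) := by
  refine ⟨hG.1.submatrix_cols _, fun r => ?_, fun r => ?_,
    fun j => (hG.2.2.2 j).submatrix_pairedCols g⟩
  · refine card_filter_of_forall_xor _ fun t => ?_
    simpa only [submatrix_apply, id, pairedCols_castAdd, pairedCols_natAdd] using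
      hG.castAdd_eq_zero_iff r (g t)
  · exact (hG.2.2.1 r).imp (fun h c => h _) (fun h c => h _)

end BCOD

theorem bcod_delete_columns_general {p m k : ℕ}
    (G : Matrix (Fin p) (Fin ((m + 1) + (m + 1))) (CODEntry k))
    (hG : IsBCOD G) :
    IsBCOD (deleteMiddleCols G) := by
  rw [deleteMiddleCols_eq_submatrix]
  exact hG.submatrix_pairedCols _

/-- deleting the `m`-th and `2m`-th columns of a `[p, 2m, k]` BCOD in
`B_i` form (here with `2m = 2(m+1)`, so `m ≥ 2`) yields again a BCOD, with `2(m-1)` columns. -/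
theorem bcod_delete_columns {p m k : ℕ} (hm : 1 ≤ m)
    (G : Matrix (Fin p) (Fin ((m + 1) + (m + 1))) (CODEntry k))
    (hG : IsBCOD G) (i : Fin k) (hi : InBForm G i) :
    IsBCOD (deleteMiddleCols G) :=
  bcod_delete_columns_general G hG
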